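/- For all integers m, n ≥ 1, 2/sqrt(n*(m+n)) < (Γ(n/2)*Γ((m+n)/2)) / (Γ((n+1)/2)*Γ((m+n+1)/2)) < 2/sqrt((n - 1/2)*(m + n - 1/2)). -/

import Mathlib

open Real Filter Topology

/-!
Write `ρ x = Γ(x + 1/2) / Γ x`. The functional equation of `Γ` gives `ρ x * ρ (x + 1/2) = x` and
`ρ (x + 1) = (x + 1/2) / x * ρ x`, and log-convexity of `Γ` gives `ρ x ^ 2 ≤ x`. Along
`x, x + 1, x + 2, …` the quotient `ρ ^ 2 / x` strictly increases, which makes that bound strict, and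
is squeezed to `1`; the quotient `ρ ^ 2 / (x - 1/4)` strictly decreases, hence stays above its limit
`1`. So `x - 1/4 < ρ x ^ 2 < x` for all `x > 0`; take `x = n/2` and `x = (m + n)/2`.
-/

noncomputable def gammaHalfRatio (x : ℝ) : ℝ := Gamma (x + 1 / 2) / Gamma x

section
variable {x : ℝ}

lemma gammaHalfRatio_pos (hx : 0 < x) : 0 < gammaHalfRatio x :=
  div_pos (Gamma_pos_of_pos (by positivity)) (Gamma_pos_of_pos hx)

lemma gammaHalfRatio_mul_gammaHalfRatio_add_half (hx : 0 < x) :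
    gammaHalfRatio x * gammaHalfRatio (x + 1 / 2) = x := by
  rw [gammaHalfRatio, gammaHalfRatio, add_assoc, add_halves, Gamma_add_one hx.ne']
  field_simp [(Gamma_pos_of_pos hx).ne', (Gamma_pos_of_pos (by positivity : 0 < x + 1 / 2)).ne']

lemma gammaHalfRatio_add_one (hx : 0 < x) :
    gammaHalfRatio (x + 1) = (x + 1 / 2) / x * gammaHalfRatio x := by
  rw [gammaHalfRatio, gammaHalfRatio, add_right_comm, Gamma_add_one (by positivity),
    Gamma_add_one hx.ne']
  field_simp [(Gamma_pos_of_pos hx).ne']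

lemma gammaHalfRatio_sq_le (hx : 0 < x) : gammaHalfRatio x ^ 2 ≤ x := by
  have hΓx := Gamma_pos_of_pos hx
  have hconv := Gamma_mul_add_mul_le_rpow_Gamma_mul_rpow_Gamma hx (by positivity : 0 < x + 1)
    one_half_pos one_half_pos (add_halves 1)
  rw [show 1 / 2 * x + 1 / 2 * (x + 1) = x + 1 / 2 by ring, Gamma_add_one hx.ne', ← sqrt_eq_rpow,
    ← sqrt_eq_rpow, ← sqrt_mul hΓx.le] at hconv
  rw [gammaHalfRatio, div_pow, div_le_iff₀ (by positivity)]
  calc Gamma (x + 1 / 2) ^ 2 ≤ √(Gamma x * (x * Gamma x)) ^ 2 := by gcongr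
    _ = x * Gamma x ^ 2 := by rw [sq_sqrt (by positivity)]; ring

lemma gammaHalfRatio_sq_lt (hx : 0 < x) : gammaHalfRatio x ^ 2 < x := by
  have hnext := gammaHalfRatio_sq_le (by positivity : 0 < x + 1)
  rw [gammaHalfRatio_add_one hx, mul_pow, div_pow, div_mul_eq_mul_div,
    div_le_iff₀ (by positivity)] at hnext
  have hρ := gammaHalfRatio_pos hx
  nlinarith [mul_pos (mul_pos hρ hρ) (by positivity : 0 < x + 1)]

lemma sq_div_add_half_le_gammaHalfRatio_sq (hx : 0 < x) :
    x ^ 2 / (x + 1 / 2) ≤ gammaHalfRatio x ^ 2 := by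
  have hnext := (gammaHalfRatio_sq_lt (by positivity : 0 < x + 1 / 2)).le
  rw [div_le_iff₀ (by positivity)]
  calc x ^ 2 = gammaHalfRatio x ^ 2 * gammaHalfRatio (x + 1 / 2) ^ 2 := by
        rw [← mul_pow, gammaHalfRatio_mul_gammaHalfRatio_add_half hx]
    _ ≤ gammaHalfRatio x ^ 2 * (x + 1 / 2) := by gcongr

lemma tendsto_gammaHalfRatio_sq_div (hx : 0 < x) :
    Tendsto (fun n : ℕ => gammaHalfRatio (x + n) ^ 2 / (x + n)) atTop (𝓝 1) := by
  have hlow : Tendsto (fun n : ℕ => (x + 1 * n) / ((x + 1 / 2) + 1 * n)) atTop (𝓝 1) := by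
    simpa using tendsto_add_mul_div_add_mul_atTop_nhds x (x + 1 / 2) 1 one_ne_zero
  refine tendsto_of_tendsto_of_tendsto_of_le_of_le hlow tendsto_const_nhds
    (fun n => ?_) (fun n => ?_)
  · have hxn : 0 < x + n := by positivity
    rw [le_div_iff₀ hxn]
    simpa [div_mul_eq_mul_div, ← sq, add_right_comm] using sq_div_add_half_le_gammaHalfRatio_sq hxn
  · have hxn : 0 < x + n := by positivity
    exact (div_le_one hxn).2 (gammaHalfRatio_sq_le hxn)

lemma gammaHalfRatio_sq_add_one_div_lt (hx : 1 / 4 < x) :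
    gammaHalfRatio (x + 1) ^ 2 / (x + 1 - 1 / 4) < gammaHalfRatio x ^ 2 / (x - 1 / 4) := by
  have hx0 : 0 < x := by linarith
  have hρ := pow_pos (gammaHalfRatio_pos hx0) 2
  rw [gammaHalfRatio_add_one hx0, mul_pow, div_pow, div_lt_div_iff₀ (by linarith) (by linarith),
    div_mul_eq_mul_div, div_mul_eq_mul_div, div_lt_iff₀ (by positivity)]
  have hcubic : (x + 1 / 2) ^ 2 * (x - 1 / 4) < x ^ 2 * (x + 1 - 1 / 4) := by nlinarith
  nlinarith [mul_lt_mul_of_pos_left hcubic hρ]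

lemma sub_quarter_lt_gammaHalfRatio_sq (hx : 0 < x) : x - 1 / 4 < gammaHalfRatio x ^ 2 := by
  rcases le_or_gt x (1 / 4) with hsmall | hx'
  · linarith [pow_pos (gammaHalfRatio_pos hx) 2]
  set w : ℕ → ℝ := fun n => gammaHalfRatio (x + n) ^ 2 / (x + n - 1 / 4)
  have hanti : StrictAnti w := strictAnti_nat_of_succ_lt fun n => by
    have hxn : 1 / 4 < x + n := by linarith [n.cast_nonneg (α := ℝ)]
    simpa [w, add_assoc] using gammaHalfRatio_sq_add_one_div_lt hxn
  have hlim : Tendsto w atTop (𝓝 1) := by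
    have hshift : Tendsto (fun n : ℕ => (x + 1 * n) / ((x - 1 / 4) + 1 * n)) atTop (𝓝 1) := by
      simpa using tendsto_add_mul_div_add_mul_atTop_nhds x (x - 1 / 4) 1 one_ne_zero
    have hprod := (tendsto_gammaHalfRatio_sq_div hx).mul hshift
    rw [mul_one] at hprod
    refine hprod.congr fun n => ?_
    have hxn : x + n ≠ 0 := by positivity
    simp only [w, one_mul, sub_add_eq_add_sub]
    field_simp
  have h1 := hanti.antitone.le_of_tendsto hlim 1
  have h0 := hanti zero_lt_one
  simp only [w, Nat.cast_zero, add_zero] at h0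
  rw [lt_div_iff₀ (by linarith)] at h0
  exact (le_mul_of_one_le_left (by linarith) h1).trans_lt h0

end

lemma Gamma_mul_Gamma_div_eq_two_div_sqrt {a b : ℝ} (ha : 0 < a) (hb : 0 < b) :
    Gamma a * Gamma b / (Gamma (a + 1 / 2) * Gamma (b + 1 / 2)) =
      2 / √((2 * gammaHalfRatio a ^ 2) * (2 * gammaHalfRatio b ^ 2)) := by
  have hρa := gammaHalfRatio_pos ha
  have hρb := gammaHalfRatio_pos hb
  rw [show (2 * gammaHalfRatio a ^ 2) * (2 * gammaHalfRatio b ^ 2) =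
      (2 * gammaHalfRatio a * gammaHalfRatio b) * (2 * gammaHalfRatio a * gammaHalfRatio b) by ring,
    sqrt_mul_self (by positivity), gammaHalfRatio, gammaHalfRatio]
  field_simp [(Gamma_pos_of_pos ha).ne', (Gamma_pos_of_pos hb).ne',
    (Gamma_pos_of_pos (by positivity : 0 < a + 1 / 2)).ne',
    (Gamma_pos_of_pos (by positivity : 0 < b + 1 / 2)).ne']

lemma two_mul_gammaHalfRatio_half_sq_bounds {k : ℝ} (hk : 0 < k) :
    k - 1 / 2 < 2 * gammaHalfRatio (k / 2) ^ 2 ∧ 2 * gammaHalfRatio (k / 2) ^ 2 < k := by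
  have hk2 : 0 < k / 2 := by positivity
  constructor
  · linarith [sub_quarter_lt_gammaHalfRatio_sq hk2]
  · linarith [gammaHalfRatio_sq_lt hk2]

theorem stmt_11_general (m n : ℕ) (hn : 1 ≤ n) :
    2 / Real.sqrt (n * (m + n)) <
      (Real.Gamma (n / 2) * Real.Gamma ((m + n) / 2)) /
        (Real.Gamma ((n + 1) / 2) * Real.Gamma ((m + n + 1) / 2)) ∧
    (Real.Gamma (n / 2) * Real.Gamma ((m + n) / 2)) /
        (Real.Gamma ((n + 1) / 2) * Real.Gamma ((m + n + 1) / 2)) <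
      2 / Real.sqrt ((n - 1 / 2) * (m + n - 1 / 2)) := by
  have hn' : (1 : ℝ) ≤ n := by exact_mod_cast hn
  have hx : (0 : ℝ) < n := by linarith
  have hy : (0 : ℝ) < m + n := by positivity
  rw [show ((n : ℝ) + 1) / 2 = n / 2 + 1 / 2 by ring,
    show ((m : ℝ) + n + 1) / 2 = (m + n) / 2 + 1 / 2 by ring,
    Gamma_mul_Gamma_div_eq_two_div_sqrt (by positivity) (by positivity)]
  obtain ⟨hx_low, hx_up⟩ := two_mul_gammaHalfRatio_half_sq_bounds hx
  obtain ⟨hy_low, hy_up⟩ := two_mul_gammaHalfRatio_half_sq_bounds hy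
  constructor
  · exact div_lt_div_of_pos_left two_pos (sqrt_pos.2 (mul_pos (by linarith) (by linarith)))
      (sqrt_lt_sqrt (by positivity) (mul_lt_mul'' hx_up hy_up (by positivity) (by positivity)))
  · exact div_lt_div_of_pos_left two_pos (sqrt_pos.2 (mul_pos (by linarith) (by linarith)))
      (sqrt_lt_sqrt (mul_nonneg (by linarith) (by linarith))
        (mul_lt_mul'' hx_low hy_low (by linarith) (by linarith)))

theorem stmt_11 (m n : ℕ) (hm : 1 ≤ m) (hn : 1 ≤ n) :
    2 / Real.sqrt (n * (m + n)) <
      (Real.Gamma (n / 2) * Real.Gamma ((m + n) / 2)) /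
        (Real.Gamma ((n + 1) / 2) * Real.Gamma ((m + n + 1) / 2)) ∧
    (Real.Gamma (n / 2) * Real.Gamma ((m + n) / 2)) /
        (Real.Gamma ((n + 1) / 2) * Real.Gamma ((m + n + 1) / 2)) <
      2 / Real.sqrt ((n - 1 / 2) * (m + n - 1 / 2)) :=
  stmt_11_general m n hn
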